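/- arXiv:math/0509609 — 3 statements merged into one kernel-verified Lean document; each statement's English description precedes it below -/
import Mathlib

section
/- Let L:(0,∞)→(0,∞) be a continuous, strictly monotone increasing, slowly varying function with L(t)→∞ as t→∞, and for fixed x∈(0,1) define a_t(x) := L^{-1}(x·L(t)). Then a_t(x) → ∞ and a_t(x)/t → 0 as t → ∞. -/
open MeasureTheory Filter Set Topology

noncomputable section

/-- `F` is regularly varying at infinity with exponent `β`; slowly varying
means regularly varying with exponent `0`. -/
def RegVary (F : ℝ → ℝ) (β : ℝ) : Prop :=
  ∀ l : ℝ, 0 < l → Tendsto (fun t => F (l * t) / F t) atTop (nhds (l ^ β))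

/-!
Since `x < 1 = lim L(c t) / L t`, eventually `L (a t) = x L t < L (c t)` for every `c > 0`, and
monotonicity of `L` turns this into `a t < c t`, i.e. `a t = o(t)`. Likewise `L (a t) = x L t → ∞`
forces `a t → ∞`.
-/

open Asymptotics

theorem MonotoneOn.tendsto_atTop_of_tendsto_comp {α : Type*} {l : Filter α} {L : ℝ → ℝ}
    {a : α → ℝ} (hL : MonotoneOn L (Ioi 0)) (ha : ∀ᶠ s in l, 0 < a s)
    (hLa : Tendsto (fun s => L (a s)) l atTop) : Tendsto a l atTop := by
  refine tendsto_atTop.2 fun M => ?_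
  have hM : (0 : ℝ) < max M 1 := lt_max_of_lt_right one_pos
  filter_upwards [ha, hLa.eventually_gt_atTop (L (max M 1))] with s has hLas
  exact (le_max_left M 1).trans (hL.reflect_lt hM has hLas).le

theorem RegVary.eventually_const_mul_lt {L : ℝ → ℝ} (hL : RegVary L 0)
    (hLpos : ∀ t : ℝ, 0 < t → 0 < L t) {x c : ℝ} (hx : x < 1) (hc : 0 < c) :
    ∀ᶠ t in atTop, x * L t < L (c * t) := by
  have hratio : Tendsto (fun t => L (c * t) / L t) atTop (nhds 1) := by
    simpa only [Real.rpow_zero] using hL c hc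
  filter_upwards [hratio.eventually_const_lt hx, eventually_gt_atTop 0] with t hlt ht
  exact (lt_div_iff₀ (hLpos t ht)).1 hlt

theorem stmt5_general (L : ℝ → ℝ)
    (hLpos : ∀ t : ℝ, 0 < t → 0 < L t)
    (hLmono : StrictMonoOn L (Set.Ioi 0))
    (hLtop : Tendsto L atTop atTop)
    (hLsv : RegVary L 0)
    (x : ℝ) (hx : x ∈ Set.Ioo (0:ℝ) 1)
    (a : ℝ → ℝ)
    (ha : ∀ᶠ t in atTop, 0 < a t ∧ L (a t) = x * L t) :
    Tendsto a atTop atTop ∧ Tendsto (fun t => a t / t) atTop (nhds 0) := by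
  obtain ⟨hx0, hx1⟩ := hx
  have hLa : Tendsto (fun t => L (a t)) atTop atTop :=
    (hLtop.const_mul_atTop hx0).congr' (ha.mono fun _ h => h.2.symm)
  refine ⟨hLmono.monotoneOn.tendsto_atTop_of_tendsto_comp (ha.mono fun _ h => h.1) hLa, ?_⟩
  have hlittleO : a =o[atTop] id := isLittleO_iff.2 fun c hc => by
    filter_upwards [ha, hLsv.eventually_const_mul_lt hLpos hx1 hc, eventually_gt_atTop 0]
      with t ⟨hat, hLat⟩ hlt ht
    rw [Real.norm_of_nonneg hat.le, id, Real.norm_of_nonneg ht.le]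
    exact (hLmono.monotoneOn.reflect_lt hat (mul_pos hc ht) (hLat ▸ hlt)).le
  exact hlittleO.tendsto_div_nhds_zero

/-- Erickson's Lemma: if `L` is a continuous, strictly increasing, slowly varying
function tending to `∞`, and `a t = L⁻¹ (x · L t)` for a fixed `x ∈ (0,1)`, then
`a t → ∞` and `a t = o(t)` as `t → ∞`. -/
theorem stmt5 (L : ℝ → ℝ)
    (hLpos : ∀ t : ℝ, 0 < t → 0 < L t)
    (hLcont : ContinuousOn L (Set.Ioi 0))
    (hLmono : StrictMonoOn L (Set.Ioi 0))
    (hLtop : Tendsto L atTop atTop)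
    (hLsv : RegVary L 0)
    (x : ℝ) (hx : x ∈ Set.Ioo (0:ℝ) 1)
    (a : ℝ → ℝ)
    (ha : ∀ᶠ t in atTop, 0 < a t ∧ L (a t) = x * L t) :
    Tendsto a atTop atTop ∧ Tendsto (fun t => a t / t) atTop (nhds 0) :=
  stmt5_general L hLpos hLmono hLtop hLsv x hx a ha
end
end

section
/- Let (X,𝒜,μ,T) be a conservative ergodic measure preserving dynamical system on a σ-finite measure space. Then every uniformly returning set is a uniform set. -/
/-!
After shifting time by some `N`, we may assume `|b n * T̂^n g - 1| ≤ 1` on `A` for every `n`, so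
`T̂^n g ≤ 2 / b n` there. Conservativity and ergodicity make a.e. orbit visit `A` infinitely often,
hence `∑ n, ∫_A T̂^n g = ∑ n, ∫_{T⁻ⁿ A} g = ∞`, which forces `∑ 1 / b n = ∞`. With
`a n = ∑ k < n, 1 / b k`, the early terms of `∑ k < n, T̂^k g` are negligible against `a n → ∞`,
and the later ones are `(1 ± ε) / b k` uniformly on `A`.
-/

open MeasureTheory Filter Set Topology

noncomputable section

variable {X : Type*} [MeasurableSpace X]

/-- `f` is a probability density with respect to `μ`, i.e. an element of `𝒫_μ`. -/
def IsDensity (μ : Measure X) (f : X → ℝ) : Prop :=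
  (∀ x, 0 ≤ f x) ∧ Integrable f μ ∧ ∫ x, f x ∂μ = 1

/-- `hatT` is the transfer operator of `T` with respect to `μ`. -/
def IsTransferOp (μ : Measure X) (T : X → X) (hatT : (X → ℝ) → (X → ℝ)) : Prop :=
  ∀ f : X → ℝ, Integrable f μ → ∀ B : Set X, MeasurableSet B →
    ∫ x in B, hatT f x ∂μ = ∫ x in T ⁻¹' B, f x ∂μ

/-- `A` is a uniform set for `f`: `(1/a_n) ∑_{k<n} T̂^k f → 1` μ-a.e. uniformly on `A`. -/
def UniformFor (μ : Measure X) (hatT : (X → ℝ) → (X → ℝ)) (A : Set X) (f : X → ℝ) : Prop :=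
  ∃ a : ℕ → ℝ, (∀ n, 0 < a n) ∧
    ∀ ε : ℝ, 0 < ε → ∀ᶠ n : ℕ in atTop,
      ∀ᵐ x ∂μ, x ∈ A →
        |(1 / a n) * (∑ k ∈ Finset.range n, (hatT^[k] f) x) - 1| ≤ ε

/-- `A` is a uniformly returning set for `f`: `b_n · T̂^n f → 1` μ-a.e. uniformly on `A`
for some positive increasing sequence `b_n ↑ ∞`. -/
def UniformlyReturningFor (μ : Measure X) (hatT : (X → ℝ) → (X → ℝ))
    (A : Set X) (f : X → ℝ) : Prop :=
  ∃ b : ℕ → ℝ, (∀ n, 0 < b n) ∧ Monotone b ∧ Tendsto b atTop atTop ∧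
    ∀ ε : ℝ, 0 < ε → ∀ᶠ n : ℕ in atTop,
      ∀ᵐ x ∂μ, x ∈ A → |b n * (hatT^[n] f) x - 1| ≤ ε

open scoped ENNReal

namespace IsTransferOp

variable {μ : Measure X} {T : X → X} {hatT : (X → ℝ) → (X → ℝ)} {h : X → ℝ}

theorem integral_apply (hop : IsTransferOp μ T hatT) (hh : Integrable h μ) :
    ∫ x, hatT h x ∂μ = ∫ x, h x ∂μ := by
  simpa using hop h hh univ MeasurableSet.univ

/-- `IsTransferOp` does not require `hatT h` to be integrable: this follows from
`∫ hatT h = ∫ h ≠ 0`, as the Bochner integral of a non-integrable function is `0`. -/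
theorem integrable_apply (hop : IsTransferOp μ T hatT) (hh : Integrable h μ)
    (h0 : ∫ x, h x ∂μ ≠ 0) : Integrable (hatT h) μ := by
  by_contra hni
  exact h0 (by rw [← hop.integral_apply hh, integral_undef hni])

theorem integrable_iterate_and_integral_iterate (hop : IsTransferOp μ T hatT)
    (hh : Integrable h μ) (h0 : ∫ x, h x ∂μ ≠ 0) (n : ℕ) :
    Integrable (hatT^[n] h) μ ∧ ∫ x, hatT^[n] h x ∂μ = ∫ x, h x ∂μ := by
  induction n with
  | zero => exact ⟨hh, rfl⟩
  | succ n ih =>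
    rw [Function.iterate_succ_apply']
    exact ⟨hop.integrable_apply ih.1 (ih.2 ▸ h0), (hop.integral_apply ih.1).trans ih.2⟩

theorem setIntegral_iterate (hop : IsTransferOp μ T hatT) (hT : Measurable T)
    (hh : Integrable h μ) (h0 : ∫ x, h x ∂μ ≠ 0) (n : ℕ) {B : Set X} (hB : MeasurableSet B) :
    ∫ x in B, hatT^[n] h x ∂μ = ∫ x in T^[n] ⁻¹' B, h x ∂μ := by
  induction n generalizing B with
  | zero => rfl
  | succ n ih =>
    rw [Function.iterate_succ_apply',
      hop _ (hop.integrable_iterate_and_integral_iterate hh h0 n).1 B hB, ih (hT hB),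
      Function.iterate_succ', Set.preimage_comp]

theorem ae_nonneg_iterate (hop : IsTransferOp μ T hatT) (hh : Integrable h μ)
    (h0 : ∫ x, h x ∂μ ≠ 0) (hpos : 0 ≤ᵐ[μ] h) (n : ℕ) : 0 ≤ᵐ[μ] hatT^[n] h := by
  induction n with
  | zero => exact hpos
  | succ n ih =>
    obtain ⟨hi, hint⟩ := hop.integrable_iterate_and_integral_iterate hh h0 n
    rw [Function.iterate_succ_apply']
    refine ae_nonneg_of_forall_setIntegral_nonneg (hop.integrable_apply hi (hint ▸ h0))
      fun s hs _ => ?_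
    rw [hop _ hi s hs]
    exact setIntegral_nonneg_of_ae_restrict (ae_restrict_of_ae ih)

theorem iterate_ae_eq [SigmaFinite μ] (hop : IsTransferOp μ T hatT) {h' : X → ℝ}
    (hh : Integrable h μ) (h0 : ∫ x, h x ∂μ ≠ 0) (heq : h =ᵐ[μ] h') (n : ℕ) :
    hatT^[n] h =ᵐ[μ] hatT^[n] h' := by
  have hh' : Integrable h' μ := hh.congr heq
  have h0' : ∫ x, h' x ∂μ ≠ 0 := integral_congr_ae heq ▸ h0
  induction n with
  | zero => exact heq
  | succ n ih =>
    obtain ⟨hi, hint⟩ := hop.integrable_iterate_and_integral_iterate hh h0 n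
    obtain ⟨hi', hint'⟩ := hop.integrable_iterate_and_integral_iterate hh' h0' n
    rw [Function.iterate_succ_apply', Function.iterate_succ_apply']
    refine ae_eq_of_forall_setIntegral_eq_of_sigmaFinite
      (fun s _ _ => (hop.integrable_apply hi (hint ▸ h0)).integrableOn)
      (fun s _ _ => (hop.integrable_apply hi' (hint' ▸ h0')).integrableOn) fun s hs _ => ?_
    rw [hop _ hi s hs, hop _ hi' s hs]
    exact integral_congr_ae (ae_restrict_of_ae ih)

theorem exists_isDensity_iterate_ae_eq [SigmaFinite μ] (hop : IsTransferOp μ T hatT)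
    {f : X → ℝ} (hf : IsDensity μ f) (N : ℕ) :
    ∃ g, IsDensity μ g ∧ ∀ n, hatT^[n] g =ᵐ[μ] hatT^[n + N] f := by
  obtain ⟨hfpos, hfi, hf1⟩ := hf
  have h0 : ∫ x, f x ∂μ ≠ 0 := hf1 ▸ one_ne_zero
  obtain ⟨hi, hint⟩ := hop.integrable_iterate_and_integral_iterate hfi h0 N
  have hpos := hop.ae_nonneg_iterate hfi h0 (Eventually.of_forall hfpos) N
  have hg : (fun x => max (hatT^[N] f x) 0) =ᵐ[μ] hatT^[N] f :=
    hpos.mono fun x hx => max_eq_left hx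
  refine ⟨fun x => max (hatT^[N] f x) 0,
    ⟨fun x => le_max_right _ _, hi.congr hg.symm, by rw [integral_congr_ae hg, hint, hf1]⟩,
    fun n => ?_⟩
  rw [Function.iterate_add]
  exact hop.iterate_ae_eq (hi.congr hg.symm) (by rw [integral_congr_ae hg, hint]; exact h0) hg n

end IsTransferOp

namespace MeasureTheory.Conservative

variable {μ : Measure X} {T : X → X} {A : Set X}

theorem ae_frequently_mem_of_ergodic (hc : Conservative T μ) (he : Ergodic T μ)
    (hA : MeasurableSet A) (h0 : μ A ≠ 0) : ∀ᵐ x ∂μ, ∃ᶠ n in atTop, T^[n] x ∈ A := by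
  have hCm : MeasurableSet (limsup (T^[·] ⁻¹' A) atTop) :=
    .measurableSet_limsup fun n => hc.measurable.iterate n hA
  have hCinv : T ⁻¹' limsup (T^[·] ⁻¹' A) atTop = limsup (T^[·] ⁻¹' A) atTop := by
    have hiter : (T^[·] ⁻¹' A) = fun n => (preimage T)^[n] A :=
      funext fun n => by rw [Set.preimage_iterate_eq]
    rw [hiter]
    exact CompleteLatticeHom.apply_limsup_iterate (CompleteLatticeHom.setPreimage T) A
  refine ((he.ae_mem_or_ae_notMem hCm hCinv).resolve_right fun hnot => h0 ?_).mono
    fun x hx => mem_limsup_iff_frequently_mem.1 hx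
  rw [measure_eq_zero_iff_ae_notMem]
  filter_upwards [hnot, hc.ae_mem_imp_frequently_image_mem hA.nullMeasurableSet]
    with x hxC hrec hxA using hxC (mem_limsup_iff_frequently_mem.2 (hrec hxA))

theorem tsum_setLIntegral_iterate_preimage_eq_top (hc : Conservative T μ) (he : Ergodic T μ)
    (hA : MeasurableSet A) (h0 : μ A ≠ 0) {F : X → ℝ≥0∞} (hF : AEMeasurable F μ)
    (hF0 : ∫⁻ x, F x ∂μ ≠ 0) : ∑' n, ∫⁻ x in T^[n] ⁻¹' A, F x ∂μ = ⊤ := by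
  have hTA : ∀ n, MeasurableSet (T^[n] ⁻¹' A) := fun n => hc.measurable.iterate n hA
  have hsum : ∀ᵐ x ∂μ, ∑' n, (T^[n] ⁻¹' A).indicator F x = ⊤ * F x := by
    filter_upwards [hc.ae_frequently_mem_of_ergodic he hA h0] with x hx
    rcases eq_or_ne (F x) 0 with hFx | hFx
    · simp [hFx]
    rw [ENNReal.top_mul hFx]
    by_contra hfin
    obtain ⟨n, hn, hlt⟩ := (hx.and_eventually ((ENNReal.tendsto_atTop_zero_of_tsum_ne_top hfin).eventually
      (gt_mem_nhds (pos_iff_ne_zero.2 hFx)))).exists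
    rw [Set.indicator_of_mem (show x ∈ T^[n] ⁻¹' A from hn)] at hlt
    exact lt_irrefl _ hlt
  calc ∑' n, ∫⁻ x in T^[n] ⁻¹' A, F x ∂μ = ∫⁻ x, ∑' n, (T^[n] ⁻¹' A).indicator F x ∂μ := by
        simp_rw [lintegral_tsum fun n => hF.indicator (hTA n), lintegral_indicator (hTA _)]
    _ = ∫⁻ x, ⊤ * F x ∂μ := lintegral_congr_ae hsum
    _ = ⊤ := by rw [lintegral_const_mul'' _ hF, ENNReal.top_mul hF0]

end MeasureTheory.Conservative

namespace IsTransferOp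

variable {μ : Measure X} {T : X → X} {hatT : (X → ℝ) → (X → ℝ)} {A : Set X} {g : X → ℝ}

theorem not_summable_of_forall_ae_le (hop : IsTransferOp μ T hatT) (hc : Conservative T μ)
    (he : Ergodic T μ) (hA : MeasurableSet A) (h0 : μ A ≠ 0) (h1 : μ A ≠ ⊤)
    (hg : IsDensity μ g) {C : ℕ → ℝ} (hC : ∀ n, ∀ᵐ x ∂μ, x ∈ A → hatT^[n] g x ≤ C n) :
    ¬ Summable C := by
  obtain ⟨hgpos, hgi, hg1⟩ := hg
  have hg0 : ∫ x, g x ∂μ ≠ 0 := hg1 ▸ one_ne_zero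
  have hterm : ∀ n, ∫⁻ x in T^[n] ⁻¹' A, ENNReal.ofReal (g x) ∂μ
      ≤ ENNReal.ofReal (μ.real A * C n) := fun n => by
    rw [← ofReal_integral_eq_lintegral_ofReal hgi.integrableOn (Eventually.of_forall hgpos),
      ← hop.setIntegral_iterate hc.measurable hgi hg0 n hA, ← smul_eq_mul, ← setIntegral_const]
    refine ENNReal.ofReal_le_ofReal (setIntegral_mono_ae_restrict
      (hop.integrable_iterate_and_integral_iterate hgi hg0 n).1.integrableOn
      (integrableOn_const h1) ?_)
    filter_upwards [ae_restrict_of_ae (hC n), ae_restrict_mem hA] with x hx hxA using hx hxA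
  intro hsum
  refine (hsum.mul_left (μ.real A)).tsum_ofReal_ne_top (top_le_iff.1 ?_)
  calc ⊤ = ∑' n, ∫⁻ x in T^[n] ⁻¹' A, ENNReal.ofReal (g x) ∂μ :=
        (hc.tsum_setLIntegral_iterate_preimage_eq_top he hA h0
          hgi.aemeasurable.ennreal_ofReal ?_).symm
    _ ≤ _ := ENNReal.tsum_le_tsum hterm
  rw [← ofReal_integral_eq_lintegral_ofReal hgi (Eventually.of_forall hgpos), hg1]
  exact ENNReal.ofReal_one ▸ one_ne_zero

theorem tendsto_sum_one_div_atTop (hop : IsTransferOp μ T hatT) (hc : Conservative T μ)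
    (he : Ergodic T μ) (hA : MeasurableSet A) (h0 : μ A ≠ 0) (h1 : μ A ≠ ⊤)
    (hg : IsDensity μ g) {c : ℕ → ℝ} (hcpos : ∀ n, 0 < c n)
    (hbdd : ∀ n, ∀ᵐ x ∂μ, x ∈ A → |c n * hatT^[n] g x - 1| ≤ 1) :
    Tendsto (fun n => ∑ k ∈ Finset.range n, 1 / c k) atTop atTop := by
  refine (not_summable_iff_tendsto_nat_atTop_of_nonneg fun n => (one_div_pos.2 (hcpos n)).le).1
    fun hsum => hop.not_summable_of_forall_ae_le hc he hA h0 h1 hg (fun n => ?_) (hsum.mul_left 2)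
  filter_upwards [hbdd n] with x hx hxA
  rw [mul_one_div, le_div_iff₀ (hcpos n)]
  linarith [(abs_le.1 (hx hxA)).2]

end IsTransferOp

theorem abs_one_div_sum_mul_sum_sub_one_le {c u : ℕ → ℝ} (hc : ∀ k, 0 < c k) {M n : ℕ}
    {ε : ℝ} (hMn : M ≤ n) (hearly : ∀ k < M, |c k * u k - 1| ≤ 1)
    (hlate : ∀ k, M ≤ k → |c k * u k - 1| ≤ ε / 2)
    (hpos : 0 < ∑ k ∈ Finset.range n, 1 / c k)
    (hM : ∑ k ∈ Finset.range M, 1 / c k ≤ ε / 2 * ∑ k ∈ Finset.range n, 1 / c k) :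
    |1 / (∑ k ∈ Finset.range n, 1 / c k) * ∑ k ∈ Finset.range n, u k - 1| ≤ ε := by
  set S := fun m => ∑ k ∈ Finset.range m, 1 / c k
  have hterm : ∀ k, |u k - 1 / c k| = |c k * u k - 1| / c k := fun k => by
    rw [show c k * u k - 1 = c k * (u k - 1 / c k) by
      rw [mul_sub, mul_one_div_cancel (hc k).ne'], abs_mul, abs_of_pos (hc k),
      mul_div_cancel_left₀ _ (hc k).ne']
  have hsum : |∑ k ∈ Finset.range n, u k - S n| ≤ S M + ε / 2 * S n :=
    calc |∑ k ∈ Finset.range n, u k - S n|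
        ≤ ∑ k ∈ Finset.range n, |u k - 1 / c k| := by
          rw [← Finset.sum_sub_distrib]; exact Finset.abs_sum_le_sum_abs _ _
      _ = ∑ k ∈ Finset.range M, |u k - 1 / c k| + ∑ k ∈ Finset.Ico M n, |u k - 1 / c k| :=
          (Finset.sum_range_add_sum_Ico _ hMn).symm
      _ ≤ S M + ∑ k ∈ Finset.Ico M n, ε / 2 * (1 / c k) := by
          refine add_le_add (Finset.sum_le_sum fun k hk => ?_) (Finset.sum_le_sum fun k hk => ?_)
          · rw [hterm]
            exact div_le_div_of_nonneg_right (hearly k (Finset.mem_range.1 hk)) (hc k).le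
          · rw [hterm, mul_one_div]
            exact div_le_div_of_nonneg_right (hlate k (Finset.mem_Ico.1 hk).1) (hc k).le
      _ ≤ S M + ε / 2 * S n := by
          rw [← Finset.mul_sum]
          gcongr
          · linarith [(abs_nonneg _).trans (hlate M le_rfl)]
          · exact Finset.sum_le_sum_of_subset_of_nonneg
              (fun k hk => Finset.mem_range.2 (Finset.mem_Ico.1 hk).2)
              fun k _ _ => (one_div_pos.2 (hc k)).le
  rw [one_div_mul_eq_div, div_sub_one hpos.ne', abs_div, abs_of_pos hpos, div_le_iff₀ hpos]
  linarith

theorem uniformFor_of_forall_ae {μ : Measure X} {hatT : (X → ℝ) → (X → ℝ)} {A : Set X}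
    {g : X → ℝ} {c : ℕ → ℝ} (hc : ∀ n, 0 < c n)
    (hS : Tendsto (fun n => ∑ k ∈ Finset.range n, 1 / c k) atTop atTop)
    (hbdd : ∀ n, ∀ᵐ x ∂μ, x ∈ A → |c n * hatT^[n] g x - 1| ≤ 1)
    (hconv : ∀ ε, 0 < ε → ∀ᶠ n in atTop, ∀ᵐ x ∂μ, x ∈ A → |c n * hatT^[n] g x - 1| ≤ ε) :
    UniformFor μ hatT A g := by
  refine ⟨fun n => max (∑ k ∈ Finset.range n, 1 / c k) 1, fun n => lt_max_of_lt_right one_pos,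
    fun ε hε => ?_⟩
  obtain ⟨M, hM⟩ := eventually_atTop.1 (hconv (ε / 2) (half_pos hε))
  have hlate : ∀ᵐ x ∂μ, ∀ k, M ≤ k → x ∈ A → |c k * hatT^[k] g x - 1| ≤ ε / 2 :=
    ae_all_iff.2 fun k => ae_all_iff.2 fun hk => hM k hk
  filter_upwards [hS.eventually_ge_atTop 1, eventually_ge_atTop M,
    hS.eventually_ge_atTop ((∑ k ∈ Finset.range M, 1 / c k) / (ε / 2))] with n hn1 hnM hnS
  filter_upwards [ae_all_iff.2 hbdd, hlate] with x hx1 hx2 hxA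
  rw [max_eq_left hn1]
  refine abs_one_div_sum_mul_sum_sub_one_le hc hnM (fun k _ => hx1 k hxA)
    (fun k hk => hx2 k hk hxA) (by linarith) ?_
  rwa [div_le_iff₀ (half_pos hε), mul_comm] at hnS

theorem stmt10_general (μ : Measure X) [SigmaFinite μ]
    (T : X → X) (hc : Conservative T μ)
    (he : Ergodic T μ)
    (hatT : (X → ℝ) → (X → ℝ)) (hop : IsTransferOp μ T hatT)
    (A : Set X) (hA : MeasurableSet A) (h0 : 0 < μ A) (h1 : μ A < ⊤)
    (f : X → ℝ) (hf : IsDensity μ f)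
    (hur : UniformlyReturningFor μ hatT A f) :
    ∃ g : X → ℝ, IsDensity μ g ∧ UniformFor μ hatT A g := by
  obtain ⟨b, hbpos, -, -, hb⟩ := hur
  obtain ⟨N, hN⟩ := eventually_atTop.1 (hb 1 one_pos)
  obtain ⟨g, hg, hgf⟩ := hop.exists_isDensity_iterate_ae_eq hf N
  have hshift : ∀ ε n, (∀ᵐ x ∂μ, x ∈ A → |b (n + N) * hatT^[n + N] f x - 1| ≤ ε) →
      ∀ᵐ x ∂μ, x ∈ A → |b (n + N) * hatT^[n] g x - 1| ≤ ε := fun ε n h => by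
    filter_upwards [h, hgf n] with x hx hxe
    rwa [hxe]
  have hbdd : ∀ n, ∀ᵐ x ∂μ, x ∈ A → |b (n + N) * hatT^[n] g x - 1| ≤ 1 :=
    fun n => hshift 1 n (hN _ (Nat.le_add_left N n))
  have hconv : ∀ ε, 0 < ε → ∀ᶠ n in atTop,
      ∀ᵐ x ∂μ, x ∈ A → |b (n + N) * hatT^[n] g x - 1| ≤ ε :=
    fun ε hε => ((tendsto_add_atTop_nat N).eventually (hb ε hε)).mono fun n => hshift ε n
  have hS := hop.tendsto_sum_one_div_atTop hc he hA h0.ne' h1.ne hg (fun n => hbpos _) hbdd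
  exact ⟨g, hg, uniformFor_of_forall_ae (fun n => hbpos _) hS hbdd hconv⟩

/-- Any uniformly returning set is uniform. -/
theorem stmt10 (μ : Measure X) [SigmaFinite μ] (hinf : μ Set.univ = ⊤)
    (T : X → X) (hT : MeasurePreserving T μ μ) (hc : Conservative T μ)
    (he : Ergodic T μ)
    (hatT : (X → ℝ) → (X → ℝ)) (hop : IsTransferOp μ T hatT)
    (A : Set X) (hA : MeasurableSet A) (h0 : 0 < μ A) (h1 : μ A < ⊤)
    (f : X → ℝ) (hf : IsDensity μ f)
    (hur : UniformlyReturningFor μ hatT A f) :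
    ∃ g : X → ℝ, IsDensity μ g ∧ UniformFor μ hatT A g :=
  stmt10_general μ T hc he hatT hop A hA h0 h1 f hf hur
end
end

section
/- Let T be a conservative ergodic measure preserving transformation of an infinite σ-finite measure space, A a set of finite positive measure with wandering rate W_n, and define the normalized spent time Kac process Ψ_n := (Σ_{k=0}^{n−Z_n} μ(A ∩ {φ > k}))/W_n. Then Ψ_n ∘ T − Ψ_n → 0 locally in measure with respect to μ. -/
/-!
Along an orbit the spent time `n - Z_n` grows by one per step, except that it drops to `0` when
the orbit enters `A` at time `n + 1`. So `|Ψ_n ∘ T - Ψ_n| ≤ μ A / W_n` unless `T^[n + 1] x ∈ A`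
and `Ψ_n x ≥ ε`; once the first `M` terms of `W_n` are `< ε W_n`, the latter forces at least `M`
steps outside `A` before time `n + 1`, so `T^[n + 1 - M] x` enters `A` for the first time at
time `M`. That set has measure `μ (A ∩ {φ > M})`, which tends to `0` by Poincaré recurrence.
Everything rests on `W_n → ∞`: grouping the visits to `A` up to time `n` by the last one shows
that they cover a set of measure at most `W_n`, while conservativity and ergodicity make almost
every point of the infinite space visit `A`. This gives convergence in `μ`-measure, hence in
`ν`-measure for every finite `ν ≪ μ`.
-/

open MeasureTheory Filter Set Topology
open scoped Classical ENNReal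

noncomputable section

variable {X : Type*} [MeasurableSpace X]

/-- First return time of `x` to `A` under `T` (`∞` if the orbit never returns). -/
def phi (T : X → X) (A : Set X) (x : X) : ℕ∞ :=
  sInf ((fun m : ℕ => (m : ℕ∞)) '' {m : ℕ | 1 ≤ m ∧ T^[m] x ∈ A})

/-- `Z n x` is the time of the last visit of the orbit of `x` to `A` up to time `n`. -/
def Z (T : X → X) (A : Set X) (n : ℕ) (x : X) : ℕ :=
  if ∃ k ≤ n, T^[k] x ∈ A then sSup {k : ℕ | k ≤ n ∧ T^[k] x ∈ A} else 0

/-- Wandering rate `W_n(A) = ∑_{k=0}^n μ(A ∩ {φ > k})`. -/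
def W (μ : Measure X) (T : X → X) (A : Set X) (n : ℕ) : ℝ :=
  ∑ k ∈ Finset.range (n + 1), (μ (A ∩ {y | (k : ℕ∞) < phi T A y})).toReal

/-- The normalized spent time Kac process
`Ψ_n = (∑_{k=0}^{n−Z_n} μ(A ∩ {φ > k})) / W_n`. -/
def KacPsi (μ : Measure X) (T : X → X) (A : Set X) (n : ℕ) (x : X) : ℝ :=
  (∑ k ∈ Finset.range (n - Z T A n x + 1),
      (μ (A ∩ {y | (k : ℕ∞) < phi T A y})).toReal) / W μ T A n

theorem Nat.findGreatest_comp_succ (P : ℕ → Prop) [DecidablePred P] (n : ℕ) :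
    Nat.findGreatest (fun k => P (k + 1)) n = Nat.findGreatest P (n + 1) - 1 := by
  induction n with
  | zero => by_cases h : P 1 <;> simp [h]
  | succ n ih =>
    rw [Nat.findGreatest_succ, Nat.findGreatest_succ (n := n + 1), ih]
    split_ifs <;> rfl

theorem MeasureTheory.TendstoInMeasure.of_absolutelyContinuous {α ι E : Type*}
    [MeasurableSpace α] [EDist E] {μ ν : Measure α} [SigmaFinite μ] [IsFiniteMeasure ν]
    {l : Filter ι} {f : ι → α → E} {g : α → E} (h : TendstoInMeasure μ f l g) (hνμ : ν ≪ μ) :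
    TendstoInMeasure ν f l g := by
  intro ε hε
  have hfin : ∫⁻ x, ν.rnDeriv μ x ∂μ ≠ ⊤ :=
    (Measure.lintegral_rnDeriv_le.trans_lt (measure_lt_top ν univ)).ne
  set s := fun i => toMeasurable μ {x | ε ≤ edist (f i x) (g x)}
  refine tendsto_of_tendsto_of_tendsto_of_le_of_le tendsto_const_nhds
    (tendsto_setLIntegral_zero hfin (s := s) ?_) (fun _ => zero_le) fun i => ?_
  · simpa only [Function.comp_def, s, measure_toMeasurable] using h ε hε
  · calc ν {x | ε ≤ edist (f i x) (g x)} ≤ ν (s i) := measure_mono (subset_toMeasurable _ _)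
      _ = ∫⁻ x in s i, ν.rnDeriv μ x ∂μ :=
        (Measure.setLIntegral_rnDeriv' hνμ (measurableSet_toMeasurable _ _)).symm

namespace KacProcess

def tailSet (T : X → X) (A : Set X) (k : ℕ) : Set X :=
  A ∩ {y | (k : ℕ∞) < phi T A y}

def firstEntrySet (T : X → X) (A : Set X) (m : ℕ) : Set X :=
  {y | (∀ i < m, T^[i] y ∉ A) ∧ T^[m] y ∈ A}

def tailSum (μ : Measure X) (T : X → X) (A : Set X) (m : ℕ) : ℝ :=
  ∑ k ∈ Finset.range m, (μ (tailSet T A k)).toReal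

section Orbits

omit [MeasurableSpace X]

variable {T : X → X} {A : Set X}

theorem natCast_lt_phi_iff {k : ℕ} {y : X} :
    (k : ℕ∞) < phi T A y ↔ ∀ i < k, T^[i + 1] y ∉ A := by
  rw [← ENat.add_one_le_iff (ENat.natCast_ne_top k), phi, le_sInf_iff]
  simp only [mem_image, mem_ofPred_eq, forall_exists_index, and_imp]
  constructor
  · intro h i hi hmem
    have := h _ (i + 1) (by omega) hmem rfl
    norm_cast at this
    omega
  · rintro h _ m hm hmem rfl
    norm_cast
    by_contra hlt
    exact h (m - 1) (by omega) (by rwa [Nat.sub_add_cancel hm])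

theorem Z_eq_findGreatest (n : ℕ) (x : X) :
    Z T A n x = Nat.findGreatest (fun k => T^[k] x ∈ A) n := by
  unfold Z
  split_ifs with h
  · obtain ⟨k, hk, hkA⟩ := h
    have hbdd : BddAbove {k : ℕ | k ≤ n ∧ T^[k] x ∈ A} := ⟨n, fun _ hb => hb.1⟩
    refine le_antisymm (csSup_le ⟨k, hk, hkA⟩ fun b hb => Nat.le_findGreatest hb.1 hb.2) ?_
    exact le_csSup hbdd
      ⟨Nat.findGreatest_le n, Nat.findGreatest_spec (P := fun k => T^[k] x ∈ A) hk hkA⟩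
  · push Not at h
    exact (Nat.findGreatest_eq_zero_iff.2 fun k _ hk => h k hk).symm

theorem Z_le (n : ℕ) (x : X) : Z T A n x ≤ n := by
  rw [Z_eq_findGreatest]; exact Nat.findGreatest_le n

theorem iterate_Z_mem {n k : ℕ} {x : X} (hk : k ≤ n) (hkA : T^[k] x ∈ A) :
    T^[Z T A n x] x ∈ A := by
  rw [Z_eq_findGreatest]; exact Nat.findGreatest_spec (P := fun k => T^[k] x ∈ A) hk hkA

theorem iterate_notMem_of_Z_lt {n j : ℕ} {x : X} (hj : Z T A n x < j) (hjn : j ≤ n) :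
    T^[j] x ∉ A := by
  rw [Z_eq_findGreatest] at hj; exact Nat.findGreatest_is_greatest hj hjn

theorem Z_succ (n : ℕ) (x : X) :
    Z T A (n + 1) x = if T^[n + 1] x ∈ A then n + 1 else Z T A n x := by
  simp only [Z_eq_findGreatest, Nat.findGreatest_succ]

/-- As `Z = 0` on orbits without visits and `0 - 1 = 0`, this also covers the case where `T x`
does not visit `A` by time `n`. -/
theorem Z_apply_self (n : ℕ) (x : X) : Z T A n (T x) = Z T A (n + 1) x - 1 := by
  simp only [Z_eq_findGreatest, ← Function.iterate_succ_apply]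
  exact Nat.findGreatest_comp_succ (fun k => T^[k] x ∈ A) n

theorem mem_tailSet {k : ℕ} {y : X} :
    y ∈ tailSet T A k ↔ y ∈ A ∧ ∀ i < k, T^[i + 1] y ∉ A := by
  rw [tailSet, mem_inter_iff, mem_ofPred_eq, natCast_lt_phi_iff]

theorem tailSet_zero : tailSet T A 0 = A := by
  ext y; simp [mem_tailSet]

theorem tailSet_antitone : Antitone (tailSet T A) :=
  fun _ _ hkl _ hy => mem_tailSet.2 ⟨(mem_tailSet.1 hy).1,
    fun i hi => (mem_tailSet.1 hy).2 i (hi.trans_le hkl)⟩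

theorem iInter_tailSet : ⋂ k, tailSet T A k = {x ∈ A | ∀ m ≥ 1, T^[m] x ∉ A} := by
  ext x
  simp only [mem_iInter, mem_tailSet, mem_ofPred_eq]
  refine ⟨fun h => ⟨(h 0).1, fun m hm => ?_⟩,
    fun h k => ⟨h.1, fun i _ => h.2 (i + 1) (by omega)⟩⟩
  simpa [Nat.sub_add_cancel hm] using (h m).2 (m - 1) (by omega)

theorem firstEntrySet_zero : firstEntrySet T A 0 = A := by
  ext y; simp [firstEntrySet]

theorem preimage_firstEntrySet_diff (m : ℕ) :
    T ⁻¹' firstEntrySet T A m \ A = firstEntrySet T A (m + 1) := by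
  ext y
  simp only [firstEntrySet, Set.mem_sdiff, mem_preimage, mem_ofPred_eq,
    ← Function.iterate_succ_apply, Nat.succ_eq_add_one, Nat.forall_lt_succ_left',
    Function.iterate_zero_apply]
  tauto

theorem preimage_firstEntrySet_inter (m : ℕ) :
    T ⁻¹' firstEntrySet T A m ∩ A = tailSet T A m \ tailSet T A (m + 1) := by
  ext y
  simp only [firstEntrySet, Set.mem_sdiff, mem_inter_iff, mem_preimage, mem_ofPred_eq,
    mem_tailSet, ← Function.iterate_succ_apply, Nat.succ_eq_add_one, Nat.forall_lt_succ_right']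
  tauto

theorem Z_apply_self_of_mem {n : ℕ} {x : X} (hx : T^[n + 1] x ∈ A) : Z T A n (T x) = n := by
  rw [Z_apply_self, Z_succ, if_pos hx, Nat.add_sub_cancel]

theorem Z_apply_self_of_notMem {n : ℕ} {x : X} (hx : T^[n + 1] x ∉ A) :
    Z T A n (T x) = Z T A n x - 1 := by
  rw [Z_apply_self, Z_succ, if_neg hx]

theorem iterate_Z_mem_tailSet {n k : ℕ} {x : X} (hk : k ≤ n) (hkA : T^[k] x ∈ A) :
    T^[Z T A n x] x ∈ tailSet T A (n - Z T A n x) := by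
  refine mem_tailSet.2 ⟨iterate_Z_mem hk hkA, fun i hi => ?_⟩
  have hZ := Z_le (T := T) (A := A) n x
  rw [← Function.iterate_add_apply]
  exact iterate_notMem_of_Z_lt (n := n) (by omega) (by omega)

theorem iterate_mem_firstEntrySet {n M : ℕ} {x : X} (hM : M ≤ n - Z T A n x)
    (hx : T^[n + 1] x ∈ A) : T^[n + 1 - M] x ∈ firstEntrySet T A M := by
  have hZ := Z_le (T := T) (A := A) n x
  refine ⟨fun i hi => ?_, ?_⟩ <;> rw [← Function.iterate_add_apply]
  · exact iterate_notMem_of_Z_lt (n := n) (by omega) (by omega)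
  · rwa [Nat.add_sub_cancel' (by omega)]

end Orbits

variable {μ : Measure X} {T : X → X} {A : Set X}

theorem measurableSet_tailSet (hT : Measurable T) (hA : MeasurableSet A) (k : ℕ) :
    MeasurableSet (tailSet T A k) := by
  have : tailSet T A k = A ∩ ⋂ i ∈ Iio k, T^[i + 1] ⁻¹' Aᶜ := by
    ext y; simp [mem_tailSet]
  rw [this]
  exact hA.inter
    (MeasurableSet.biInter (to_countable _) fun i _ => hA.compl.preimage (hT.iterate _))

theorem measurableSet_firstEntrySet (hT : Measurable T) (hA : MeasurableSet A) (m : ℕ) :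
    MeasurableSet (firstEntrySet T A m) := by
  have : firstEntrySet T A m = (⋂ i ∈ Iio m, T^[i] ⁻¹' Aᶜ) ∩ T^[m] ⁻¹' A := by
    ext y; simp [firstEntrySet]
  rw [this]
  exact (MeasurableSet.biInter (to_countable _) fun i _ =>
    hA.compl.preimage (hT.iterate i)).inter (hA.preimage (hT.iterate m))

theorem measure_tailSet_le (k : ℕ) : μ (tailSet T A k) ≤ μ A :=
  measure_mono inter_subset_left

theorem tendsto_measure_tailSet (hT : Measurable T) (hc : Conservative T μ)
    (hA : MeasurableSet A) (h1 : μ A < ⊤) :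
    Tendsto (fun k => μ (tailSet T A k)) atTop (𝓝 0) := by
  have h := tendsto_measure_iInter_atTop
    (fun k => (measurableSet_tailSet hT hA k).nullMeasurableSet) tailSet_antitone
    ⟨0, by rw [tailSet_zero]; exact h1.ne⟩
  rwa [iInter_tailSet, hc.measure_mem_forall_ge_image_notMem_eq_zero hA.nullMeasurableSet 1] at h

/-- Inside `A`, `T ⁻¹' firstEntrySet T A m` is `tailSet T A m \ tailSet T A (m + 1)`, exactly
what `tailSet T A m` loses at the next step. -/
theorem measure_firstEntrySet (hT : MeasurePreserving T μ μ) (hA : MeasurableSet A)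
    (h1 : μ A < ⊤) (m : ℕ) : μ (firstEntrySet T A m) = μ (tailSet T A m) := by
  induction m with
  | zero => rw [firstEntrySet_zero, tailSet_zero]
  | succ m ih =>
    have hfin : μ (tailSet T A m \ tailSet T A (m + 1)) ≠ ⊤ :=
      ((measure_mono sdiff_subset).trans (measure_tailSet_le m)).trans_lt h1 |>.ne
    have hentry : μ (T ⁻¹' firstEntrySet T A m) =
        μ (tailSet T A m \ tailSet T A (m + 1)) + μ (firstEntrySet T A (m + 1)) := by
      rw [← measure_inter_add_sdiff _ hA, preimage_firstEntrySet_inter,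
        preimage_firstEntrySet_diff]
    have htail : μ (tailSet T A m) =
        μ (tailSet T A m \ tailSet T A (m + 1)) + μ (tailSet T A (m + 1)) := by
      rw [add_comm,
        measure_add_sdiff (measurableSet_tailSet hT.measurable hA _).nullMeasurableSet,
        union_eq_self_of_subset_left (tailSet_antitone m.le_succ)]
    rw [hT.measure_preimage (measurableSet_firstEntrySet hT.measurable hA m).nullMeasurableSet,
      ih, htail] at hentry
    exact ((ENNReal.add_right_inj hfin).1 hentry).symm

/-- Conservativity makes `⋃ j, T^[j] ⁻¹' A` invariant mod `μ`, so by ergodicity it has full,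
hence infinite, measure. -/
theorem measure_iUnion_preimage_iterate_eq_top (hinf : μ univ = ⊤) (hc : Conservative T μ)
    (he : Ergodic T μ) (hA : MeasurableSet A) (h0 : 0 < μ A) :
    μ (⋃ j, T^[j] ⁻¹' A) = ⊤ := by
  set U := ⋃ j, T^[j] ⁻¹' A
  have hU : MeasurableSet U := .iUnion fun j => hA.preimage (he.measurable.iterate j)
  have hpre : T ⁻¹' U ⊆ U := by
    intro x hx
    obtain ⟨j, hj⟩ := mem_iUnion.1 hx
    exact mem_iUnion.2 ⟨j + 1, by rwa [mem_preimage, Function.iterate_succ_apply]⟩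
  have hnull : U \ T ⁻¹' U ⊆ {x ∈ A | ∀ m ≥ 1, T^[m] x ∉ A} := by
    rintro x ⟨hxU, hTx⟩
    have hnot : ∀ m ≥ 1, T^[m] x ∉ A := fun m hm hmA => hTx <| mem_iUnion.2
      ⟨m - 1, by rwa [mem_preimage, ← Function.iterate_succ_apply, Nat.succ_eq_add_one,
        Nat.sub_add_cancel hm]⟩
    obtain ⟨j, hj⟩ := mem_iUnion.1 hxU
    obtain rfl : j = 0 := by by_contra hj0; exact hnot j (Nat.one_le_iff_ne_zero.2 hj0) hj
    exact ⟨hj, hnot⟩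
  have hinv : T ⁻¹' U =ᵐ[μ] U := hpre.eventuallyLE.antisymm <| ae_le_set.2 <|
    measure_mono_null hnull (hc.measure_mem_forall_ge_image_notMem_eq_zero hA.nullMeasurableSet 1)
  rcases he.quasiErgodic.ae_empty_or_univ₀ hU.nullMeasurableSet hinv with hempty | huniv
  · have hAU : μ A ≤ μ U := measure_mono (subset_iUnion_of_subset 0 subset_rfl)
    rw [measure_congr hempty, measure_empty] at hAU
    exact absurd h0 (not_lt.2 hAU)
  · rw [measure_congr huniv, hinf]

theorem measure_accumulate_preimage_iterate_le (hT : MeasurePreserving T μ μ)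
    (hA : MeasurableSet A) (n : ℕ) :
    μ (accumulate (fun j => T^[j] ⁻¹' A) n) ≤ ∑ k ∈ Finset.range (n + 1), μ (tailSet T A k) := by
  have hcover : accumulate (fun j => T^[j] ⁻¹' A) n ⊆
      ⋃ j ∈ Finset.range (n + 1), T^[j] ⁻¹' tailSet T A (n - j) := by
    intro x hx
    obtain ⟨k, hk, hkA⟩ := mem_accumulate.1 hx
    exact mem_biUnion (Finset.mem_range.2 (Nat.lt_succ_of_le (Z_le n x)))
      (iterate_Z_mem_tailSet hk hkA)
  calc μ (accumulate (fun j => T^[j] ⁻¹' A) n)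
      ≤ ∑ j ∈ Finset.range (n + 1), μ (T^[j] ⁻¹' tailSet T A (n - j)) :=
        (measure_mono hcover).trans (measure_biUnion_finset_le _ _)
    _ = ∑ j ∈ Finset.range (n + 1), μ (tailSet T A (n - j)) := by
        refine Finset.sum_congr rfl fun j _ => ?_
        exact (hT.iterate j).measure_preimage
          (measurableSet_tailSet hT.measurable hA _).nullMeasurableSet
    _ = ∑ k ∈ Finset.range (n + 1), μ (tailSet T A k) :=
        Finset.sum_range_reflect (fun k => μ (tailSet T A k)) (n + 1)

theorem ofReal_W (h1 : μ A < ⊤) (n : ℕ) :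
    ENNReal.ofReal (W μ T A n) = ∑ k ∈ Finset.range (n + 1), μ (tailSet T A k) := by
  rw [W, ENNReal.ofReal_sum_of_nonneg fun _ _ => ENNReal.toReal_nonneg]
  exact Finset.sum_congr rfl fun k _ =>
    ENNReal.ofReal_toReal ((measure_tailSet_le k).trans_lt h1).ne

theorem tendsto_W_atTop (hinf : μ univ = ⊤) (hT : MeasurePreserving T μ μ)
    (hc : Conservative T μ) (he : Ergodic T μ) (hA : MeasurableSet A) (h0 : 0 < μ A)
    (h1 : μ A < ⊤) : Tendsto (W μ T A) atTop atTop := by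
  have hvisit : Tendsto (fun n => μ (accumulate (fun j => T^[j] ⁻¹' A) n)) atTop (𝓝 ⊤) := by
    rw [← measure_iUnion_preimage_iterate_eq_top hinf hc he hA h0]
    exact tendsto_measure_iUnion_accumulate
  refine tendsto_atTop.2 fun b =>
    (hvisit.eventually_const_lt (ENNReal.ofReal_lt_top (r := b))).mono fun n hn => ?_
  have hle := hn.le.trans ((measure_accumulate_preimage_iterate_le hT hA n).trans_eq
    (ofReal_W h1 n).symm)
  exact (ENNReal.ofReal_le_ofReal_iff (Finset.sum_nonneg fun _ _ => ENNReal.toReal_nonneg)).1 hle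

theorem kacPsi_eq (n : ℕ) (x : X) :
    KacPsi μ T A n x = tailSum μ T A (n - Z T A n x + 1) / W μ T A n := rfl

theorem tailSum_nonneg (m : ℕ) : 0 ≤ tailSum μ T A m :=
  Finset.sum_nonneg fun _ _ => ENNReal.toReal_nonneg

theorem tailSum_mono : Monotone (tailSum μ T A) := fun _ _ h =>
  Finset.sum_le_sum_of_subset_of_nonneg (Finset.range_subset_range.2 h)
    fun _ _ _ => ENNReal.toReal_nonneg

theorem tailSum_succ (m : ℕ) :
    tailSum μ T A (m + 1) = tailSum μ T A m + (μ (tailSet T A m)).toReal :=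
  Finset.sum_range_succ _ _

theorem tailSum_one : tailSum μ T A 1 = (μ A).toReal := by
  rw [tailSum, Finset.sum_range_one, tailSet_zero]

theorem W_pos (h0 : 0 < μ A) (h1 : μ A < ⊤) (n : ℕ) : 0 < W μ T A n :=
  calc 0 < (μ A).toReal := ENNReal.toReal_pos h0.ne' h1.ne
    _ = tailSum μ T A 1 := tailSum_one.symm
    _ ≤ W μ T A n := tailSum_mono (Nat.le_add_left 1 n)

theorem kacPsi_nonneg (n : ℕ) (x : X) : 0 ≤ KacPsi μ T A n x :=
  div_nonneg (tailSum_nonneg _) (tailSum_nonneg _)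

theorem kacPsi_apply_self_of_mem {n : ℕ} {x : X} (hx : T^[n + 1] x ∈ A) :
    KacPsi μ T A n (T x) = (μ A).toReal / W μ T A n := by
  rw [kacPsi_eq, Z_apply_self_of_mem hx, Nat.sub_self, zero_add, tailSum_one]

theorem abs_kacPsi_apply_self_sub_le (h1 : μ A < ⊤) {n : ℕ} {x : X} (hx : T^[n + 1] x ∉ A) :
    |KacPsi μ T A n (T x) - KacPsi μ T A n x| ≤ (μ A).toReal / W μ T A n := by
  have hW : 0 ≤ W μ T A n := tailSum_nonneg (n + 1)
  rw [kacPsi_eq, kacPsi_eq, Z_apply_self_of_notMem hx, ← sub_div, abs_div, abs_of_nonneg hW]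
  gcongr
  have hZ := Z_le (T := T) (A := A) n x
  obtain h | h : n - (Z T A n x - 1) + 1 = n - Z T A n x + 1 ∨
      n - (Z T A n x - 1) + 1 = n - Z T A n x + 1 + 1 := by omega
  · rw [h, sub_self, abs_zero]
    exact ENNReal.toReal_nonneg
  · rw [h, tailSum_succ, add_sub_cancel_left, abs_of_nonneg ENNReal.toReal_nonneg]
    exact ENNReal.toReal_mono h1.ne (measure_tailSet_le _)

theorem iterate_mem_firstEntrySet_of_le_abs (h0 : 0 < μ A) (h1 : μ A < ⊤) {ε : ℝ} {n M : ℕ}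
    (hεA : (μ A).toReal / W μ T A n < ε) (hεM : tailSum μ T A M / W μ T A n < ε) {x : X}
    (hx : ε ≤ |KacPsi μ T A n (T x) - KacPsi μ T A n x|) :
    T^[n + 1 - M] x ∈ firstEntrySet T A M := by
  by_cases hmem : T^[n + 1] x ∈ A
  · refine iterate_mem_firstEntrySet ?_ hmem
    have hψ : ε ≤ KacPsi μ T A n x := by
      rw [kacPsi_apply_self_of_mem hmem] at hx
      have ha : 0 ≤ (μ A).toReal / W μ T A n :=
        div_nonneg ENNReal.toReal_nonneg (W_pos h0 h1 n).le
      rcases le_abs'.1 hx with h | h <;> linarith [kacPsi_nonneg (μ := μ) (T := T) (A := A) n x]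
    rw [kacPsi_eq] at hψ
    have hlt := (div_lt_div_iff_of_pos_right (W_pos h0 h1 n)).1 (hεM.trans_le hψ)
    have := tailSum_mono.reflect_lt hlt
    omega
  · exact absurd (hx.trans (abs_kacPsi_apply_self_sub_le h1 hmem)) (not_le.2 hεA)

theorem tendstoInMeasure_kacPsi_apply_self_sub (hinf : μ univ = ⊤)
    (hT : MeasurePreserving T μ μ) (hc : Conservative T μ) (he : Ergodic T μ)
    (hA : MeasurableSet A) (h0 : 0 < μ A) (h1 : μ A < ⊤) :
    TendstoInMeasure μ (fun n x => KacPsi μ T A n (T x) - KacPsi μ T A n x) atTop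
      (fun _ => 0) := by
  refine tendstoInMeasure_iff_norm.2 fun ε hε => ENNReal.tendsto_nhds_zero.2 fun η hη => ?_
  obtain ⟨M, hM⟩ :=
    ((tendsto_measure_tailSet hT.measurable hc hA h1).eventually (Iic_mem_nhds hη)).exists
  have hW := tendsto_W_atTop hinf hT hc he hA h0 h1
  filter_upwards [(tendsto_const_nhds.div_atTop hW).eventually (gt_mem_nhds hε),
    (tendsto_const_nhds.div_atTop hW).eventually (gt_mem_nhds hε)] with n hεA hεM
  calc μ {x | ε ≤ ‖KacPsi μ T A n (T x) - KacPsi μ T A n x - 0‖}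
      ≤ μ (T^[n + 1 - M] ⁻¹' firstEntrySet T A M) := measure_mono fun x hx =>
        iterate_mem_firstEntrySet_of_le_abs h0 h1 hεA hεM (by simpa using hx)
    _ = μ (tailSet T A M) := by
        rw [(hT.iterate _).measure_preimage
          (measurableSet_firstEntrySet hT.measurable hA M).nullMeasurableSet,
          measure_firstEntrySet hT hA h1]
    _ ≤ η := hM

end KacProcess

/-- `Ψ_n ∘ T − Ψ_n → 0` locally in measure. -/
theorem stmt16 (μ : Measure X) [SigmaFinite μ] (hinf : μ Set.univ = ⊤)
    (T : X → X) (hT : MeasurePreserving T μ μ) (hc : Conservative T μ)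
    (he : Ergodic T μ)
    (A : Set X) (hA : MeasurableSet A) (h0 : 0 < μ A) (h1 : μ A < ⊤) :
    ∀ ν : Measure X, IsProbabilityMeasure ν → ν ≪ μ →
      TendstoInMeasure ν
        (fun n x => KacPsi μ T A n (T x) - KacPsi μ T A n x) atTop (fun _ => 0) :=
  fun _ _ hνμ => TendstoInMeasure.of_absolutelyContinuous
    (KacProcess.tendstoInMeasure_kacPsi_apply_self_sub hinf hT hc he hA h0 h1) hνμ

end
end
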